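/- arXiv:1801.07596 — 7 statements merged into one kernel-verified Lean document; each statement's English description precedes it below -/
import Mathlib

section
/- Let α, β, γ, δ ∈ ℂ, let δ₁ ∈ ℂ satisfy δ₁² = −δ, and set β₁ = β − 2δ₁. Let U ⊆ ℂ ∖ {0} be open and let y : U → ℂ be holomorphic with y(x) ≠ 0 for all x ∈ U, satisfying P_III on U. Define z : U → ℂ by z = (2/y²)(y′ − δ₁ + y/x). Then the pair (y, z) satisfies the P_III system on U, i.e. y′ = y²z/2 + δ₁ − y/x and z′ = −y z²/2 + 2γ y + (2/x)(α + β₁/y²) at every point of U. -/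
/-!
The first equation is the definition of `z` solved for `y′`. For the second, differentiate
`z = (2/y²)(y′ − δ₁ + y/x)` (a holomorphic `y` is twice differentiable) and eliminate `y″` with
P_III: the `δ/y` term of P_III cancels against the `δ₁²` term of `y z²/2` since `δ₁² = −δ`, and
the remaining `δ₁`-terms combine with `β` into `β₁ = β − 2δ₁`.
-/

theorem hasDerivAt_painleveIII_z {y p : ℂ → ℂ} {q x : ℂ} (δ₁ : ℂ)
    (hy : HasDerivAt y (p x) x) (hp : HasDerivAt p q x) (hy0 : y x ≠ 0) (hx0 : x ≠ 0) :
    HasDerivAt (fun t => 2 / y t ^ 2 * (p t - δ₁ + y t / t))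
      (-(4 * p x / y x ^ 3) * (p x - δ₁ + y x / x)
        + 2 / y x ^ 2 * (q + p x / x - y x / x ^ 2)) x := by
  have hinv : HasDerivAt (fun t => 2 / y t ^ 2) (-(4 * p x / y x ^ 3)) x := by
    refine ((hasDerivAt_const x (2 : ℂ)).div (hy.pow 2) (pow_ne_zero 2 hy0)).congr_deriv ?_
    simp only [Pi.pow_apply]
    field_simp
    ring
  have hw : HasDerivAt (fun t => p t - δ₁ + y t / t) (q + p x / x - y x / x ^ 2) x := by
    refine ((hp.sub_const δ₁).add (hy.div (hasDerivAt_id' x) hx0)).congr_deriv ?_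
    field_simp
    ring
  exact hinv.mul hw

theorem painleveIII_z_first_eq {y p x : ℂ} (δ₁ : ℂ) (hy0 : y ≠ 0) :
    p = y ^ 2 * (2 / y ^ 2 * (p - δ₁ + y / x)) / 2 + δ₁ - y / x := by
  field_simp
  ring

theorem painleveIII_z_second_eq {α β γ δ δ₁ y p q x : ℂ} (hδ₁ : δ₁ ^ 2 = -δ)
    (hy0 : y ≠ 0) (hx0 : x ≠ 0)
    (hq : q = p ^ 2 / y - p / x + (α * y ^ 2 + β) / x + γ * y ^ 3 + δ / y) :
    -(4 * p / y ^ 3) * (p - δ₁ + y / x) + 2 / y ^ 2 * (q + p / x - y / x ^ 2)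
      = -(y * (2 / y ^ 2 * (p - δ₁ + y / x)) ^ 2) / 2 + 2 * γ * y
        + 2 / x * (α + (β - 2 * δ₁) / y ^ 2) := by
  rw [hq, show δ = -δ₁ ^ 2 by rw [hδ₁, neg_neg]]
  field_simp
  ring

/-- If `y` is a nowhere-zero holomorphic solution of the third Painlevé
equation on an open set `U ⊆ ℂ ∖ {0}`, and `z = (2/y²)(y′ − δ₁ + y/x)`, then `(y, z)`
satisfies the P_III system on `U`. -/
theorem pIII_to_system (α β γ δ δ₁ β₁ : ℂ)
    (hδ₁ : δ₁ ^ 2 = -δ) (hβ₁ : β₁ = β - 2 * δ₁)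
    (U : Set ℂ) (hU : IsOpen U) (hU0 : (0 : ℂ) ∉ U)
    (y : ℂ → ℂ) (hy : DifferentiableOn ℂ y U)
    (hy0 : ∀ x ∈ U, y x ≠ 0)
    (hP3 : ∀ x ∈ U, deriv (deriv y) x =
      (deriv y x) ^ 2 / y x - deriv y x / x + (α * (y x) ^ 2 + β) / x
        + γ * (y x) ^ 3 + δ / y x)
    (z : ℂ → ℂ)
    (hz : ∀ x ∈ U, z x = (2 / (y x) ^ 2) * (deriv y x - δ₁ + y x / x)) :
    ∀ x ∈ U,
      deriv y x = (y x) ^ 2 * z x / 2 + δ₁ - y x / x ∧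
      deriv z x = -(y x * (z x) ^ 2) / 2 + 2 * γ * y x
        + (2 / x) * (α + β₁ / (y x) ^ 2) := by
  intro x hx
  have hx0 : x ≠ 0 := fun h => hU0 (h ▸ hx)
  have hyA : AnalyticOnNhd ℂ y U := hy.analyticOnNhd hU
  have hz_nhds : z =ᶠ[nhds x] fun t => 2 / y t ^ 2 * (deriv y t - δ₁ + y t / t) :=
    Filter.eventuallyEq_of_mem (hU.mem_nhds hx) hz
  have hz' := hasDerivAt_painleveIII_z δ₁ (hyA x hx).differentiableAt.hasDerivAt
    (hyA.deriv x hx).differentiableAt.hasDerivAt (hy0 x hx) hx0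
  rw [hz_nhds.deriv_eq, hz'.deriv, hz x hx, hβ₁]
  exact ⟨painleveIII_z_first_eq δ₁ (hy0 x hx),
    painleveIII_z_second_eq hδ₁ (hy0 x hx) hx0 (hP3 x hx)⟩
end

section
/- Let α, γ, δ₁, β₁ ∈ ℂ, and set δ = −δ₁² and β = β₁ + 2δ₁. Let U ⊆ ℂ ∖ {0} be open and let y, z : U → ℂ be holomorphic with y(x) ≠ 0 for all x ∈ U, satisfying the P_III system on U: y′ = y²z/2 + δ₁ − y/x and z′ = −y z²/2 + 2γ y + (2/x)(α + β₁/y²). Then y is twice differentiable on U and satisfies the third Painlevé equation y″ = (y′)²/y − y′/x + (α y² + β)/x + γ y³ + δ/y at every point of U. -/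
/-! Differentiating the first equation of the system expresses `y''` through `y, y', z, z'`;
substituting `z'` from the second equation and eliminating `z` via the first one
(`y² z / 2 = y' - δ₁ + y / x`) leaves exactly the right-hand side of P_III. -/

open Filter

lemma HasDerivAt.painleveIII_system_rhs {y z : ℂ → ℂ} {x y' z' : ℂ} (δ₁ : ℂ)
    (hy : HasDerivAt y y' x) (hz : HasDerivAt z z' x) (hx : x ≠ 0) :
    HasDerivAt (fun t => y t ^ 2 * z t / 2 + δ₁ - y t / t)
      (y x * y' * z x + y x ^ 2 * z' / 2 - (y' / x - y x / x ^ 2)) x := by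
  refine (((((hy.pow 2).mul hz).div_const 2).add_const δ₁).sub
    (hy.div (hasDerivAt_id x) hx)).congr_deriv ?_
  simp only [id, Pi.pow_apply]
  field_simp
  ring

lemma painleveIII_eq_of_system {α γ δ₁ β₁ δ β x y y' z z' : ℂ}
    (hδ : δ = -δ₁ ^ 2) (hβ : β = β₁ + 2 * δ₁) (hx : x ≠ 0) (hy : y ≠ 0)
    (hy' : y' = y ^ 2 * z / 2 + δ₁ - y / x)
    (hz' : z' = -(y * z ^ 2) / 2 + 2 * γ * y + (2 / x) * (α + β₁ / y ^ 2)) :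
    y * y' * z + y ^ 2 * z' / 2 - (y' / x - y / x ^ 2) =
      y' ^ 2 / y - y' / x + (α * y ^ 2 + β) / x + γ * y ^ 3 + δ / y := by
  subst hδ hβ hy' hz'
  field_simp
  ring

lemma hasDerivAt_deriv_of_system {δ₁ : ℂ} {U : Set ℂ} (hU : IsOpen U)
    (hU0 : (0 : ℂ) ∉ U) {y z : ℂ → ℂ} (hy : DifferentiableOn ℂ y U)
    (hz : DifferentiableOn ℂ z U)
    (hsys1 : ∀ x ∈ U, deriv y x = (y x) ^ 2 * z x / 2 + δ₁ - y x / x)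
    {x : ℂ} (hx : x ∈ U) :
    HasDerivAt (deriv y)
      (y x * deriv y x * z x + y x ^ 2 * deriv z x / 2 - (deriv y x / x - y x / x ^ 2)) x := by
  have hyx := (hy.differentiableAt (hU.mem_nhds hx)).hasDerivAt
  have hzx := (hz.differentiableAt (hU.mem_nhds hx)).hasDerivAt
  have hx0 : x ≠ 0 := fun h => hU0 (h ▸ hx)
  exact (hyx.painleveIII_system_rhs δ₁ hzx hx0).congr_of_eventuallyEq
    (eventually_of_mem (hU.mem_nhds hx) hsys1)

/-- If `(y, z)` is a holomorphic solution of the P_III system on an open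
set `U ⊆ ℂ ∖ {0}` with `y` nowhere zero, then `y` is twice differentiable on `U` and
satisfies the third Painlevé equation with `δ = −δ₁²`, `β = β₁ + 2δ₁`. -/
theorem system_to_pIII (α γ δ₁ β₁ δ β : ℂ)
    (hδ : δ = -δ₁ ^ 2) (hβ : β = β₁ + 2 * δ₁)
    (U : Set ℂ) (hU : IsOpen U) (hU0 : (0 : ℂ) ∉ U)
    (y z : ℂ → ℂ) (hy : DifferentiableOn ℂ y U) (hz : DifferentiableOn ℂ z U)
    (hy0 : ∀ x ∈ U, y x ≠ 0)
    (hsys1 : ∀ x ∈ U, deriv y x = (y x) ^ 2 * z x / 2 + δ₁ - y x / x)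
    (hsys2 : ∀ x ∈ U, deriv z x = -(y x * (z x) ^ 2) / 2 + 2 * γ * y x
        + (2 / x) * (α + β₁ / (y x) ^ 2)) :
    DifferentiableOn ℂ (deriv y) U ∧
    ∀ x ∈ U, deriv (deriv y) x =
      (deriv y x) ^ 2 / y x - deriv y x / x + (α * (y x) ^ 2 + β) / x
        + γ * (y x) ^ 3 + δ / y x := by
  have hy'' := fun x (hx : x ∈ U) => hasDerivAt_deriv_of_system hU hU0 hy hz hsys1 hx
  refine ⟨fun x hx => (hy'' x hx).differentiableAt.differentiableWithinAt, fun x hx => ?_⟩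
  rw [(hy'' x hx).deriv]
  exact painleveIII_eq_of_system hδ hβ (fun h => hU0 (h ▸ hx)) (hy0 x hx) (hsys1 x hx)
    (hsys2 x hx)
end

section
/- Let α, γ, δ₁, β₁ ∈ ℂ with γ ≠ 0. Let x₀ ∈ ℂ ∖ {0}, let D′ be a punctured open disk centered at x₀, and let y, z : D′ → ℂ be holomorphic with y nowhere zero, satisfying the P_III system y′ = y²z/2 + δ₁ − y/x and z′ = −y z²/2 + 2γ y + (2/x)(α + β₁/y²) on D′. Suppose z extends holomorphically to x₀ and y is meromorphic at x₀ with a pole at x₀. Then the pole of y at x₀ is simple, z(x₀)² = 4γ, and lim_{x → x₀} (x − x₀)·y(x) = −2/z(x₀). -/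
/-!
Near the pole write `(x - x₀) ^ (m + 1) * y x = g x` with `g` analytic and `c = g x₀ ≠ 0`;
then `(x - x₀) ^ (m + 2) * y' → -(m + 1) c`. Multiply the `z`-equation by `(x - x₀) ^ (m + 1)`:
everything except `-c Z(x₀)² / 2 + 2γc` tends to `0`, so `Z(x₀)² = 4γ ≠ 0`. Multiply the
`y`-equation by `(x - x₀) ^ (2m + 2)`: the left side tends to `-(m + 1) c · 0 ^ m` and the
right side to `c² Z(x₀) / 2 ≠ 0`, hence `m = 0`, and then `c = -2 / Z(x₀)`.
-/

open Metric Filter Topology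

section PoleExpansion

variable {𝕜 : Type*} [NontriviallyNormedField 𝕜] {f g : 𝕜 → 𝕜} {x₀ : 𝕜}

theorem exists_sub_pow_mul_eventuallyEq_of_meromorphicOrderAt_neg
    (ho : meromorphicOrderAt f x₀ < 0) :
    ∃ m : ℕ, meromorphicOrderAt f x₀ = ((-(m + 1 : ℕ) : ℤ) : WithTop ℤ) ∧
      ∃ g : 𝕜 → 𝕜, AnalyticAt 𝕜 g x₀ ∧ g x₀ ≠ 0 ∧
        ∀ᶠ x in 𝓝[≠] x₀, (x - x₀) ^ (m + 1) * f x = g x := by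
  obtain ⟨n, hn⟩ := WithTop.ne_top_iff_exists.mp ho.ne_top
  have hneg : n < 0 := by rw [← hn] at ho; exact_mod_cast ho
  obtain ⟨g, hg, hg0, hfg⟩ := (meromorphicOrderAt_eq_int_iff
    (meromorphicAt_of_meromorphicOrderAt_ne_zero ho.ne)).1 hn.symm
  have hexp : (((-n - 1).toNat + 1 : ℕ) : ℤ) + n = 0 := by omega
  refine ⟨(-n - 1).toNat, by rw [← hn]; congr 1; omega, g, hg, hg0, ?_⟩
  filter_upwards [hfg, self_mem_nhdsWithin] with x hx hne
  rw [hx, smul_eq_mul, ← mul_assoc, ← zpow_natCast, ← zpow_add₀ (sub_ne_zero.2 hne), hexp,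
    zpow_zero, one_mul]

theorem tendsto_sub_pow_succ_mul_deriv [CompleteSpace 𝕜] {k : ℕ} (hg : AnalyticAt 𝕜 g x₀)
    (hfg : ∀ᶠ x in 𝓝[≠] x₀, (x - x₀) ^ k * f x = g x) :
    Tendsto (fun x => (x - x₀) ^ (k + 1) * deriv f x) (𝓝[≠] x₀) (𝓝 (-(k * g x₀))) := by
  have hf : f =ᶠ[𝓝[≠] x₀] fun x => g x / (x - x₀) ^ k := by
    filter_upwards [hfg, self_mem_nhdsWithin] with x hx hne
    rw [← hx, mul_div_cancel_left₀ _ (pow_ne_zero _ (sub_ne_zero.2 hne))]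
  have hdf : ∀ᶠ x in 𝓝[≠] x₀,
      (x - x₀) ^ (k + 1) * deriv f x = (x - x₀) * deriv g x - k * g x := by
    filter_upwards [hf.nhdsNE_deriv, self_mem_nhdsWithin,
      hg.eventually_analyticAt.filter_mono nhdsWithin_le_nhds] with x hx hne hgx
    have hs : x - x₀ ≠ 0 := sub_ne_zero.2 hne
    have hquot : HasDerivAt (fun x => g x / (x - x₀) ^ k) _ x :=
      hgx.differentiableAt.hasDerivAt.div (((hasDerivAt_id x).sub_const x₀).pow k)
        (pow_ne_zero _ hs)
    rw [hx, hquot.deriv]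
    rcases k with _ | k
    · simp
    · simp only [id, Nat.add_sub_cancel, mul_one]
      field_simp
      ring
  have hlim : Tendsto (fun x => (x - x₀) * deriv g x - k * g x) (𝓝 x₀)
      (𝓝 ((x₀ - x₀) * deriv g x₀ - k * g x₀)) :=
    ((continuousAt_id.sub continuousAt_const).mul hg.deriv.continuousAt).sub
      (continuousAt_const.mul hg.continuousAt)
  rw [sub_self, zero_mul, zero_sub] at hlim
  exact (hlim.mono_left nhdsWithin_le_nhds).congr' (hdf.mono fun _ h => h.symm)

end PoleExpansion

namespace PainleveIII

variable {l : Filter ℂ} [l.NeBot] {s y z : ℂ → ℂ} {m : ℕ} {c Z₀ : ℂ}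

theorem sq_eq_four_mul_of_tendsto {dz w : ℂ → ℂ} {dz₀ w₀ γ : ℂ}
    (hs : Tendsto s l (𝓝 0)) (hy : Tendsto (fun x => s x ^ (m + 1) * y x) l (𝓝 c))
    (hc : c ≠ 0) (hz : Tendsto z l (𝓝 Z₀)) (hdz : Tendsto dz l (𝓝 dz₀))
    (hw : Tendsto w l (𝓝 w₀))
    (hsys : ∀ᶠ x in l, dz x = -(y x * z x ^ 2) / 2 + 2 * γ * y x + w x) :
    Z₀ ^ 2 = 4 * γ := by
  have ht : Tendsto (fun x => s x ^ (m + 1)) l (𝓝 0) := by simpa using hs.pow (m + 1)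
  have hrhs : Tendsto (fun x => -(s x ^ (m + 1) * y x * z x ^ 2) / 2
      + 2 * γ * (s x ^ (m + 1) * y x) + s x ^ (m + 1) * w x) l
      (𝓝 (-(c * Z₀ ^ 2) / 2 + 2 * γ * c + 0 * w₀)) :=
    (((hy.mul (hz.pow 2)).neg.div_const 2).add (hy.const_mul _)).add (ht.mul hw)
  have hbal : 0 * dz₀ = -(c * Z₀ ^ 2) / 2 + 2 * γ * c + 0 * w₀ :=
    tendsto_nhds_unique ((ht.mul hdz).congr' (hsys.mono fun x hx => by rw [hx]; ring)) hrhs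
  have hfactor : c * (Z₀ ^ 2 - 4 * γ) = 0 := by linear_combination 2 * hbal
  exact sub_eq_zero.1 ((mul_eq_zero.1 hfactor).resolve_left hc)

theorem eq_zero_and_eq_neg_two_div_of_tendsto {dy r : ℂ → ℂ} {r₀ δ₁ : ℂ}
    (hs : Tendsto s l (𝓝 0)) (hy : Tendsto (fun x => s x ^ (m + 1) * y x) l (𝓝 c))
    (hc : c ≠ 0) (hdy : Tendsto (fun x => s x ^ (m + 2) * dy x) l (𝓝 (-((m + 1 : ℕ) * c))))
    (hz : Tendsto z l (𝓝 Z₀)) (hZ₀ : Z₀ ≠ 0) (hr : Tendsto r l (𝓝 r₀))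
    (hsys : ∀ᶠ x in l, dy x = y x ^ 2 * z x / 2 + δ₁ - y x * r x) :
    m = 0 ∧ c = -2 / Z₀ := by
  have ht : Tendsto (fun x => s x ^ (m + 1)) l (𝓝 0) := by simpa using hs.pow (m + 1)
  have hrhs : Tendsto (fun x => (s x ^ (m + 1) * y x) ^ 2 * z x / 2
      + (s x ^ (m + 1)) ^ 2 * δ₁ - s x ^ (m + 1) * y x * s x ^ (m + 1) * r x) l
      (𝓝 (c ^ 2 * Z₀ / 2 + 0 ^ 2 * δ₁ - c * 0 * r₀)) :=
    ((((hy.pow 2).mul hz).div_const 2).add ((ht.pow 2).mul_const δ₁)).sub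
      ((hy.mul ht).mul hr)
  have hbal : 0 ^ m * -((m + 1 : ℕ) * c) = c ^ 2 * Z₀ / 2 + 0 ^ 2 * δ₁ - c * 0 * r₀ :=
    tendsto_nhds_unique (((hs.pow m).mul hdy).congr' (hsys.mono fun x hx => by rw [hx]; ring))
      hrhs
  obtain rfl : m = 0 := by
    by_contra hm
    rw [zero_pow hm, zero_mul] at hbal
    exact mul_ne_zero (pow_ne_zero 2 hc) hZ₀ (by linear_combination -2 * hbal)
  refine ⟨rfl, ?_⟩
  rw [eq_div_iff hZ₀]
  refine mul_left_cancel₀ hc ?_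
  linear_combination -2 * hbal

end PainleveIII

theorem movable_pole_of_y_general (α γ δ₁ β₁ : ℂ) (hγ : γ ≠ 0)
    (x₀ : ℂ) (hx₀ : x₀ ≠ 0) (r : ℝ) (hr : 0 < r)
    (y z : ℂ → ℂ)
    (hsys1 : ∀ x ∈ ball x₀ r \ {x₀},
      deriv y x = (y x) ^ 2 * z x / 2 + δ₁ - y x / x)
    (hsys2 : ∀ x ∈ ball x₀ r \ {x₀},
      deriv z x = -(y x * (z x) ^ 2) / 2 + 2 * γ * y x
        + (2 / x) * (α + β₁ / (y x) ^ 2))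
    (Z : ℂ → ℂ) (hZ : DifferentiableOn ℂ Z (ball x₀ r))
    (hZz : ∀ x ∈ ball x₀ r \ {x₀}, Z x = z x)
    (hy_pole : meromorphicOrderAt y x₀ < ((0 : ℤ) : WithTop ℤ)) :
    meromorphicOrderAt y x₀ = ((-1 : ℤ) : WithTop ℤ) ∧
    (Z x₀) ^ 2 = 4 * γ ∧
    Tendsto (fun x => (x - x₀) * y x) (𝓝[≠] x₀) (𝓝 (-2 / Z x₀)) := by
  obtain ⟨m, hord, g, hg, hg0, hyg⟩ :=
    exists_sub_pow_mul_eventuallyEq_of_meromorphicOrderAt_neg hy_pole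
  have hpunct : ∀ᶠ x in 𝓝[≠] x₀, x ∈ ball x₀ r \ {x₀} :=
    sdiff_mem_nhdsWithin_compl (ball_mem_nhds x₀ hr) _
  have hZan : AnalyticAt ℂ Z x₀ := hZ.analyticAt (ball_mem_nhds x₀ hr)
  have hzZ : Z =ᶠ[𝓝[≠] x₀] z := hpunct.mono hZz
  have hz : Tendsto z (𝓝[≠] x₀) (𝓝 (Z x₀)) :=
    (hZan.continuousAt.tendsto.mono_left nhdsWithin_le_nhds).congr' hzZ
  have hdz : Tendsto (deriv z) (𝓝[≠] x₀) (𝓝 (deriv Z x₀)) :=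
    (hZan.deriv.continuousAt.tendsto.mono_left nhdsWithin_le_nhds).congr' hzZ.nhdsNE_deriv
  have hs : Tendsto (fun x => x - x₀) (𝓝[≠] x₀) (𝓝 0) := by
    simpa using ((continuous_sub_right x₀).tendsto x₀).mono_left nhdsWithin_le_nhds
  have hy : Tendsto (fun x => (x - x₀) ^ (m + 1) * y x) (𝓝[≠] x₀) (𝓝 (g x₀)) :=
    (hg.continuousAt.tendsto.mono_left nhdsWithin_le_nhds).congr' (hyg.mono fun _ h => h.symm)
  have hyinv : Tendsto (fun x => (y x)⁻¹) (𝓝[≠] x₀) (𝓝 0) :=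
    tendsto_inv₀_cobounded.comp (tendsto_cobounded_of_meromorphicOrderAt_neg hy_pole)
  have hxinv : Tendsto (fun x : ℂ => x⁻¹) (𝓝[≠] x₀) (𝓝 x₀⁻¹) :=
    (tendsto_inv₀ hx₀).mono_left nhdsWithin_le_nhds
  have hw : Tendsto (fun x => 2 / x * (α + β₁ / y x ^ 2)) (𝓝[≠] x₀)
      (𝓝 (2 * x₀⁻¹ * (α + β₁ * 0 ^ 2))) := by
    simpa only [div_eq_mul_inv, inv_pow] using
      (hxinv.const_mul 2).mul (tendsto_const_nhds.add ((hyinv.pow 2).const_mul β₁))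
  have hZsq : Z x₀ ^ 2 = 4 * γ :=
    PainleveIII.sq_eq_four_mul_of_tendsto hs hy hg0 hz hdz hw (hpunct.mono hsys2)
  have hZ0 : Z x₀ ≠ 0 := fun h => hγ (by simpa [h] using hZsq.symm)
  obtain ⟨rfl, hc⟩ :=
    PainleveIII.eq_zero_and_eq_neg_two_div_of_tendsto (δ₁ := δ₁) hs hy hg0
      (tendsto_sub_pow_succ_mul_deriv hg hyg) hz hZ0 hxinv
      (hpunct.mono fun x hx => by rw [hsys1 x hx, div_eq_mul_inv (y x)])
  refine ⟨by simpa using hord, hZsq, ?_⟩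
  simpa [hc] using hy

/-- At a movable pole `x₀` of `y` (a point where `y` has a pole while `z`
extends holomorphically), the pole of `y` is simple, `z(x₀)² = 4γ`, and the residue of
`y` is `−2/z(x₀)`. -/
theorem movable_pole_of_y (α γ δ₁ β₁ : ℂ) (hγ : γ ≠ 0)
    (x₀ : ℂ) (hx₀ : x₀ ≠ 0) (r : ℝ) (hr : 0 < r)
    (y z : ℂ → ℂ)
    (hy : DifferentiableOn ℂ y (ball x₀ r \ {x₀}))
    (hz : DifferentiableOn ℂ z (ball x₀ r \ {x₀}))
    (hy0 : ∀ x ∈ ball x₀ r \ {x₀}, y x ≠ 0)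
    (hsys1 : ∀ x ∈ ball x₀ r \ {x₀},
      deriv y x = (y x) ^ 2 * z x / 2 + δ₁ - y x / x)
    (hsys2 : ∀ x ∈ ball x₀ r \ {x₀},
      deriv z x = -(y x * (z x) ^ 2) / 2 + 2 * γ * y x
        + (2 / x) * (α + β₁ / (y x) ^ 2))
    (Z : ℂ → ℂ) (hZ : DifferentiableOn ℂ Z (ball x₀ r))
    (hZz : ∀ x ∈ ball x₀ r \ {x₀}, Z x = z x)
    (hy_mer : MeromorphicAt y x₀)
    (hy_pole : meromorphicOrderAt y x₀ < ((0 : ℤ) : WithTop ℤ)) :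
    meromorphicOrderAt y x₀ = ((-1 : ℤ) : WithTop ℤ) ∧
    (Z x₀) ^ 2 = 4 * γ ∧
    Tendsto (fun x => (x - x₀) * y x) (𝓝[≠] x₀) (𝓝 (-2 / Z x₀)) :=
  movable_pole_of_y_general α γ δ₁ β₁ hγ x₀ hx₀ r hr y z hsys1 hsys2 Z hZ hZz hy_pole
end

section
/- Let α, γ, δ₁, β₁ ∈ ℂ with γ ≠ 0. Let x₀ ∈ ℂ ∖ {0}, let D′ be a punctured open disk centered at x₀, and let y, z : D′ → ℂ be holomorphic with y nowhere zero, satisfying the P_III system y′ = y²z/2 + δ₁ − y/x and z′ = −y z²/2 + 2γ y + (2/x)(α + β₁/y²) on D′. Suppose z extends holomorphically to x₀, y is meromorphic at x₀ with a pole at x₀, and write z(x₀) = 2w where w ∈ ℂ satisfies w² = γ. Then lim_{x → x₀} ( y(x) + 1/(w (x − x₀)) ) = −(α − w)/(2 x₀ γ), and z′(x₀) = −2α/x₀. -/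
open Metric Filter Topology

/-!
Near the pole, `u = 1/y` extends analytically with `u(x₀) = 0`, and the first equation becomes
the Riccati equation `u' = -z/2 - δ₁u² + u/x`, so `u'(x₀) = -w`. Since `z² - 4γ = (z - 2w)(z + 2w)`,
the second equation reads `z' = -((z - 2w)/u)(z + 2w)/2 + (2/x)(α + β₁u²)`; letting `x → x₀`, the
quotient tends to `z'(x₀)/u'(x₀)`, whence `z'(x₀) = 2z'(x₀) + 2α/x₀`. Differentiating the Riccati
equation once more gives `u''(x₀) = (α - w)/x₀`, and at a simple zero of `u` the constant term of
the Laurent expansion of `1/u` is `-u''(x₀)/(2u'(x₀)²)`.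
-/

section General

variable {𝕜 : Type*} [NontriviallyNormedField 𝕜] {f g : 𝕜 → 𝕜} {a f' g' : 𝕜}

theorem HasDerivAt.tendsto_div_of_eq_zero (hf : HasDerivAt f f' a) (hg : HasDerivAt g g' a)
    (hfa : f a = 0) (hga : g a = 0) (hg' : g' ≠ 0) :
    Tendsto (fun x => f x / g x) (𝓝[≠] a) (𝓝 (f' / g')) := by
  refine ((hasDerivAt_iff_tendsto_slope.1 hf).div (hasDerivAt_iff_tendsto_slope.1 hg) hg').congr' ?_
  filter_upwards [self_mem_nhdsWithin] with x hx
  rw [Pi.div_apply, slope_def_field, slope_def_field, hfa, hga, sub_zero, sub_zero,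
    div_div_div_cancel_right₀ (sub_ne_zero.2 hx)]

theorem exists_analyticAt_eq_inv_of_meromorphicOrderAt_neg
    (hf : meromorphicOrderAt f a < 0) :
    ∃ g : 𝕜 → 𝕜, AnalyticAt 𝕜 g a ∧ g a = 0 ∧ g =ᶠ[𝓝[≠] a] fun x => (f x)⁻¹ := by
  classical
  have hg : Function.update f⁻¹ a 0 =ᶠ[𝓝[≠] a] f⁻¹ :=
    eventually_nhdsWithin_of_forall fun x hx => Function.update_of_ne hx _ _
  refine ⟨_, AnalyticAt.of_meromorphicOrderAt_pos ?_ (Function.update_self _ _ _),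
    Function.update_self _ _ _, hg⟩
  rw [meromorphicOrderAt_congr hg, meromorphicOrderAt_inv]
  exact LinearOrderedAddCommGroupWithTop.neg_pos.2 (.inl hf)

theorem AnalyticAt.analyticAt_dslope (hf : AnalyticAt 𝕜 f a) : AnalyticAt 𝕜 (dslope f a) a :=
  let ⟨_, hp⟩ := hf
  hp.has_fpower_series_dslope_fslope.analyticAt

theorem AnalyticAt.tendsto_inv_sub_inv (hf : AnalyticAt 𝕜 f a) (h0 : f a = 0)
    (h1 : deriv f a ≠ 0) :
    Tendsto (fun x => (f x)⁻¹ - (deriv f a * (x - a))⁻¹) (𝓝[≠] a)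
      (𝓝 (-deriv (dslope f a) a / deriv f a ^ 2)) := by
  set D := dslope f a
  have hD : AnalyticAt 𝕜 D a := hf.analyticAt_dslope
  have hDa : D a = deriv f a := dslope_same f a
  have hDa0 : D a ≠ 0 := hDa ▸ h1
  have hslope : Tendsto (slope D a) (𝓝[≠] a) (𝓝 (deriv D a)) :=
    hasDerivAt_iff_tendsto_slope.1 hD.differentiableAt.hasDerivAt
  have hlim := hslope.neg.div
    ((hD.continuousAt.tendsto.mono_left nhdsWithin_le_nhds).mul_const (D a)) (mul_ne_zero hDa0 hDa0)
  convert hlim.congr' ?_ using 2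
  · rw [hDa]; ring
  · filter_upwards [self_mem_nhdsWithin,
      nhdsWithin_le_nhds (hD.continuousAt.eventually_ne hDa0)] with x hxa hDx
    have hfx : f x = (x - a) * D x := by rw [← smul_eq_mul, sub_smul_dslope, h0, sub_zero]
    have hxa' : x - a ≠ 0 := sub_ne_zero.2 hxa
    rw [Pi.div_apply, slope_def_field, hfx, ← hDa]
    field_simp
    ring

theorem HasDerivAt.inv_of_riccati {x z δ : 𝕜} (hf : HasDerivAt f (f x ^ 2 * z / 2 + δ - f x / x) x)
    (hfx : f x ≠ 0) :
    HasDerivAt (fun t => (f t)⁻¹) (-z / 2 - δ * (f x)⁻¹ ^ 2 + (f x)⁻¹ / x) x :=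
  (hf.inv hfx).congr_deriv (by field_simp; ring)

variable [CompleteSpace 𝕜]

theorem AnalyticAt.deriv_deriv_eq_two_mul_deriv_dslope (hf : AnalyticAt 𝕜 f a) :
    deriv (deriv f) a = 2 * deriv (dslope f a) a := by
  set D := dslope f a
  have hD : AnalyticAt 𝕜 D a := hf.analyticAt_dslope
  have hfD : f = fun t => f a + (t - a) * D t := by
    funext t
    rw [← smul_eq_mul, sub_smul_dslope]
    ring
  have hderiv : deriv f =ᶠ[𝓝 a] fun x => D x + (x - a) * deriv D x := by
    filter_upwards [hD.eventually_analyticAt] with x hx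
    have : HasDerivAt (fun t => f a + (t - a) * D t) (D x + (x - a) * deriv D x) x :=
      ((((hasDerivAt_id' x).sub_const a).mul hx.differentiableAt.hasDerivAt).const_add
        (f a)).congr_deriv (by ring)
    rw [hfD, this.deriv]
  have hrhs : HasDerivAt (fun x => D x + (x - a) * deriv D x) (2 * deriv D a) a :=
    (hD.differentiableAt.hasDerivAt.add (((hasDerivAt_id' a).sub_const a).mul
      hD.deriv.differentiableAt.hasDerivAt)).congr_deriv (by ring)
  rw [hderiv.deriv_eq, hrhs.deriv]

end General

namespace PainleveIII

section

variable {𝕜 : Type*} [NontriviallyNormedField 𝕜] [CompleteSpace 𝕜] {y u z : 𝕜 → 𝕜} {x₀ δ : 𝕜}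

theorem deriv_inv_eventuallyEq (hx₀ : x₀ ≠ 0) (hu : AnalyticAt 𝕜 u x₀) (hz : ContinuousAt z x₀)
    (huy : u =ᶠ[𝓝[≠] x₀] fun x => (y x)⁻¹)
    (hy : ∀ᶠ x in 𝓝[≠] x₀, HasDerivAt y (y x ^ 2 * z x / 2 + δ - y x / x) x ∧ y x ≠ 0) :
    deriv u =ᶠ[𝓝 x₀] fun x => -z x / 2 - δ * u x ^ 2 + u x / x := by
  have hV : ContinuousAt (fun x => -z x / 2 - δ * u x ^ 2 + u x / x) x₀ := by
    have := hu.continuousAt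
    fun_prop (disch := exact hx₀)
  refine (hu.deriv.continuousAt.eventuallyEq_nhds_iff_eventuallyEq_nhdsNE hV).1 ?_
  filter_upwards [huy.nhdsNE_deriv, huy, hy] with x hdx hx ⟨hyx, hy0⟩
  rw [hdx, hx, (hyx.inv_of_riccati hy0).deriv]

end

variable {y u z : ℂ → ℂ} {x₀ w α β δ : ℂ}

theorem deriv_z_at_pole (hx₀ : x₀ ≠ 0) (hw : w ≠ 0) (hz : AnalyticAt ℂ z x₀)
    (hu : HasDerivAt u (-w) x₀) (hu0 : u x₀ = 0) (hz0 : z x₀ = 2 * w)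
    (huy : u =ᶠ[𝓝[≠] x₀] fun x => (y x)⁻¹)
    (h : ∀ᶠ x in 𝓝[≠] x₀, deriv z x =
      -(y x * z x ^ 2) / 2 + 2 * w ^ 2 * y x + 2 / x * (α + β / y x ^ 2)) :
    deriv z x₀ = -2 * α / x₀ := by
  have hq : Tendsto (fun x => (z x - 2 * w) / u x) (𝓝[≠] x₀) (𝓝 (deriv z x₀ / -w)) :=
    (hz.differentiableAt.hasDerivAt.sub_const _).tendsto_div_of_eq_zero hu (by rw [hz0, sub_self])
      hu0 (neg_ne_zero.2 hw)
  have hrest : ContinuousAt (fun x => ((z x + 2 * w) / 2, 2 / x * (α + β * u x ^ 2))) x₀ := by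
    have := hz.continuousAt
    have := hu.continuousAt
    fun_prop (disch := exact hx₀)
  have hlim := (hq.neg.mul (hrest.fst.tendsto.mono_left nhdsWithin_le_nhds)).add
    (hrest.snd.tendsto.mono_left nhdsWithin_le_nhds)
  have heq := tendsto_nhds_unique
    ((hz.deriv.continuousAt.tendsto.mono_left nhdsWithin_le_nhds).congr' ?_) hlim
  · simp only [hz0, hu0] at heq
    field_simp at heq
    rw [eq_div_iff hx₀]
    linear_combination -heq
  · filter_upwards [huy, h] with x hux hx
    rw [hx, hux, div_inv_eq_mul]
    ring

theorem deriv_dslope_at_pole (hx₀ : x₀ ≠ 0) (hu : AnalyticAt ℂ u x₀) (hz : AnalyticAt ℂ z x₀)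
    (hu0 : u x₀ = 0) (hu1 : HasDerivAt u (-w) x₀) (hz1 : deriv z x₀ = -2 * α / x₀)
    (hV : deriv u =ᶠ[𝓝 x₀] fun x => -z x / 2 - δ * u x ^ 2 + u x / x) :
    deriv (dslope u x₀) x₀ = (α - w) / (2 * x₀) := by
  have hV' : HasDerivAt (fun x => -z x / 2 - δ * u x ^ 2 + u x / x) ((α - w) / x₀) x₀ :=
    (((hz.differentiableAt.hasDerivAt.neg.div_const 2).sub ((hu1.pow 2).const_mul δ)).add
      (hu1.div (hasDerivAt_id' x₀) hx₀)).congr_deriv (by rw [hz1, hu0]; field_simp; ring)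
  have := hu.deriv_deriv_eq_two_mul_deriv_dslope
  rw [hV.deriv_eq, hV'.deriv] at this
  linear_combination (-1 / 2) * this

end PainleveIII

theorem movable_pole_of_y_expansion_general (α γ δ₁ β₁ : ℂ) (hγ : γ ≠ 0)
    (x₀ : ℂ) (hx₀ : x₀ ≠ 0) (r : ℝ) (hr : 0 < r)
    (y z : ℂ → ℂ)
    (hsys1 : ∀ x ∈ ball x₀ r \ {x₀},
      deriv y x = (y x) ^ 2 * z x / 2 + δ₁ - y x / x)
    (hsys2 : ∀ x ∈ ball x₀ r \ {x₀},
      deriv z x = -(y x * (z x) ^ 2) / 2 + 2 * γ * y x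
        + (2 / x) * (α + β₁ / (y x) ^ 2))
    (Z : ℂ → ℂ) (hZ : DifferentiableOn ℂ Z (ball x₀ r))
    (hZz : ∀ x ∈ ball x₀ r \ {x₀}, Z x = z x)
    (hy_pole : meromorphicOrderAt y x₀ < ((0 : ℤ) : WithTop ℤ))
    (w : ℂ) (hw : w ^ 2 = γ) (hZx₀ : Z x₀ = 2 * w) :
    Tendsto (fun x => y x + 1 / (w * (x - x₀))) (𝓝[≠] x₀)
      (𝓝 (-(α - w) / (2 * x₀ * γ))) ∧
    deriv Z x₀ = -2 * α / x₀ := by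
  subst hw
  have hw0 : w ≠ 0 := ne_zero_pow two_ne_zero hγ
  have hS : ball x₀ r \ {x₀} ∈ 𝓝[≠] x₀ := sdiff_mem_nhdsWithin_compl (ball_mem_nhds x₀ hr) _
  have hZa : AnalyticAt ℂ Z x₀ := hZ.analyticAt (ball_mem_nhds x₀ hr)
  have hy_mer : MeromorphicAt y x₀ := meromorphicAt_of_meromorphicOrderAt_ne_zero hy_pole.ne
  obtain ⟨U, hUa, hU0, hUy⟩ := exists_analyticAt_eq_inv_of_meromorphicOrderAt_neg hy_pole
  have hUV := PainleveIII.deriv_inv_eventuallyEq hx₀ hUa hZa.continuousAt hUy (by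
    filter_upwards [hy_mer.eventually_analyticAt, hS,
      (meromorphicOrderAt_ne_top_iff_eventually_ne_zero hy_mer).1 hy_pole.ne_top] with x hxa hxS hx0
    exact ⟨hZz x hxS ▸ hsys1 x hxS ▸ hxa.differentiableAt.hasDerivAt, hx0⟩)
  have hU1 : HasDerivAt U (-w) x₀ :=
    hUa.differentiableAt.hasDerivAt.congr_deriv (by rw [hUV.eq_of_nhds, hU0, hZx₀]; ring)
  have hZ1 : deriv Z x₀ = -2 * α / x₀ := by
    refine PainleveIII.deriv_z_at_pole hx₀ hw0 hZa hU1 hU0 hZx₀ hUy (β := β₁) ?_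
    filter_upwards [hS, eventually_nhdsNE_eventually_nhds_iff.2 hS] with x hxS hnS
    rw [EventuallyEq.deriv_eq (hnS.mono hZz), hZz x hxS, hsys2 x hxS]
  have hU2 := PainleveIII.deriv_dslope_at_pole hx₀ hUa hZa hU0 hU1 hZ1 hUV
  have hlim := hUa.tendsto_inv_sub_inv hU0 (hU1.deriv ▸ neg_ne_zero.2 hw0)
  rw [hU1.deriv, hU2] at hlim
  refine ⟨?_, hZ1⟩
  convert hlim.congr' ?_ using 2
  · field_simp
  · filter_upwards [hUy] with x hx
    rw [hx, inv_inv]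
    field_simp
    ring

/-- At a movable pole `x₀` of `y`, writing `z(x₀) = 2w` with `w² = γ`,
the next Laurent coefficient of `y` is `−(α − w)/(2x₀γ)`, and `z′(x₀) = −2α/x₀`. -/
theorem movable_pole_of_y_expansion (α γ δ₁ β₁ : ℂ) (hγ : γ ≠ 0)
    (x₀ : ℂ) (hx₀ : x₀ ≠ 0) (r : ℝ) (hr : 0 < r)
    (y z : ℂ → ℂ)
    (hy : DifferentiableOn ℂ y (ball x₀ r \ {x₀}))
    (hz : DifferentiableOn ℂ z (ball x₀ r \ {x₀}))
    (hy0 : ∀ x ∈ ball x₀ r \ {x₀}, y x ≠ 0)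
    (hsys1 : ∀ x ∈ ball x₀ r \ {x₀},
      deriv y x = (y x) ^ 2 * z x / 2 + δ₁ - y x / x)
    (hsys2 : ∀ x ∈ ball x₀ r \ {x₀},
      deriv z x = -(y x * (z x) ^ 2) / 2 + 2 * γ * y x
        + (2 / x) * (α + β₁ / (y x) ^ 2))
    (Z : ℂ → ℂ) (hZ : DifferentiableOn ℂ Z (ball x₀ r))
    (hZz : ∀ x ∈ ball x₀ r \ {x₀}, Z x = z x)
    (hy_mer : MeromorphicAt y x₀)
    (hy_pole : meromorphicOrderAt y x₀ < ((0 : ℤ) : WithTop ℤ))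
    (w : ℂ) (hw : w ^ 2 = γ) (hZx₀ : Z x₀ = 2 * w) :
    Tendsto (fun x => y x + 1 / (w * (x - x₀))) (𝓝[≠] x₀)
      (𝓝 (-(α - w) / (2 * x₀ * γ))) ∧
    deriv Z x₀ = -2 * α / x₀ :=
  movable_pole_of_y_expansion_general α γ δ₁ β₁ hγ x₀ hx₀ r hr y z hsys1 hsys2 Z hZ hZz hy_pole w hw
    hZx₀
end

section
/- Let α, γ, δ₁, β₁ ∈ ℂ with γ ≠ 0 and δ₁ ≠ 0. For every ε > 0 and every M > 0 there exists η > 0 with the following property: whenever U ⊆ ℂ ∖ {0} is open, y, z : U → ℂ are holomorphic with y nowhere zero and satisfy the P_III system y′ = y²z/2 + δ₁ − y/x, z′ = −y z²/2 + 2γ y + (2/x)(α + β₁/y²) on U, and x ∈ U satisfies z(x) ≠ 0, |1/y(x)| ≤ M and |y(x)/z(x)| < η, then E(y(x), z(x)) ≠ 0 and | x · (E∘(y,z))′(x) / E(y(x), z(x)) + 2 | < ε. -/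
open Filter Topology

set_option maxHeartbeats 1000000

/-- Lemma on behaviour near `L₂`: near the line `L₂` (described in the
chart `y₂₁ = 1/y`, `z₂₁ = y/z` by `|1/y| ≤ M`, `|y/z| < η`), the logarithmic derivative
of the energy `E = y²z²/4 + δ₁z − γy²` satisfies `|x·E′/E + 2| < ε`. -/
theorem energy_log_deriv_near_L2 (α γ δ₁ β₁ : ℂ) (hγ : γ ≠ 0) (hδ₁ : δ₁ ≠ 0) :
    ∀ ε > (0 : ℝ), ∀ M > (0 : ℝ), ∃ η > (0 : ℝ),
      ∀ (U : Set ℂ), IsOpen U → (0 : ℂ) ∉ U →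
      ∀ y z : ℂ → ℂ, DifferentiableOn ℂ y U → DifferentiableOn ℂ z U →
      (∀ x ∈ U, y x ≠ 0) →
      (∀ x ∈ U, deriv y x = (y x) ^ 2 * z x / 2 + δ₁ - y x / x) →
      (∀ x ∈ U, deriv z x = -(y x * (z x) ^ 2) / 2 + 2 * γ * y x
          + (2 / x) * (α + β₁ / (y x) ^ 2)) →
      ∀ x ∈ U, z x ≠ 0 → ‖1 / y x‖ ≤ M → ‖y x / z x‖ < η →
        (y x) ^ 2 * (z x) ^ 2 / 4 + δ₁ * z x - γ * (y x) ^ 2 ≠ 0 ∧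
        ‖x * deriv (fun t => (y t) ^ 2 * (z t) ^ 2 / 4 + δ₁ * z t - γ * (y t) ^ 2) x
            / ((y x) ^ 2 * (z x) ^ 2 / 4 + δ₁ * z x - γ * (y x) ^ 2)
          + 2‖ < ε := by
  intro ε hε M hM
  set C : ℝ := ‖α‖*M + (‖β₁‖+2*‖δ₁‖)*M^3 + 2*‖δ₁‖*‖α‖*M^4 + 2*‖δ₁‖*‖β₁‖*M^6 with hCdef
  have hC0 : 0 ≤ C := by positivity
  set D : ℝ := ‖δ₁‖*M^3 + ‖γ‖*M^2 with hDdef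
  have hD0 : 0 ≤ D := by positivity
  clear_value C D
  refine ⟨min (ε/(8*(C+1))) (min 1 (1/(8*(D+1)))), by positivity, ?_⟩
  intro U hU h0 y z hy hz hyne hdy hdz x hxU hzx hMy hη
  have hx0 : x ≠ 0 := fun h => h0 (h ▸ hxU)
  have ha : y x ≠ 0 := hyne x hxU
  -- compute the derivative of the energy first
  have Hy := (hy.differentiableAt (hU.mem_nhds hxU)).hasDerivAt
  have Hz := (hz.differentiableAt (hU.mem_nhds hxU)).hasDerivAt
  have HE := ((((Hy.pow 2).mul (Hz.pow 2)).div_const 4).add (Hz.const_mul δ₁)).sub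
    ((Hy.pow 2).const_mul γ)
  have hDE : deriv (fun t => (y t) ^ 2 * (z t) ^ 2 / 4 + δ₁ * z t - γ * (y t) ^ 2) x
      = ((↑2 * y x ^ 1 * deriv y x) * z x ^ 2 + y x ^ 2 * (↑2 * z x ^ 1 * deriv z x)) / 4
        + δ₁ * deriv z x - γ * (↑2 * y x ^ 1 * deriv y x) := HE.deriv
  rw [hdy x hxU, hdz x hxU] at hDE
  clear HE Hy Hz hdy hdz hy hz hyne h0 hU hγ hδ₁
  rw [hDE]; clear hDE
  -- abstract the point values
  obtain ⟨a, hadef⟩ : ∃ c, y x = c := ⟨_, rfl⟩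
  obtain ⟨b, hbdef⟩ : ∃ c, z x = c := ⟨_, rfl⟩
  rw [hadef] at ha hMy hη ⊢
  rw [hbdef] at hzx hη ⊢
  clear hadef hbdef hxU
  set u : ℂ := 1/a with hudef
  set w : ℂ := a/b with hwdef
  clear_value u w
  have hb : b ≠ 0 := hzx
  have hu : ‖u‖ ≤ M := hMy
  have hu0 : (0:ℝ) ≤ ‖u‖ := norm_nonneg _
  have hw0 : (0:ℝ) ≤ ‖w‖ := norm_nonneg _
  have hw1 : ‖w‖ < ε/(8*(C+1)) := hη.trans_le (min_le_left _ _)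
  have hw2 : ‖w‖ ≤ 1 :=
    le_of_lt (hη.trans_le ((min_le_right _ _).trans (min_le_left _ _)))
  have hw3 : ‖w‖ < 1/(8*(D+1)) :=
    hη.trans_le ((min_le_right _ _).trans (min_le_right _ _))
  have hwsq : ‖w‖^2 ≤ ‖w‖ := by nlinarith
  -- the two key quantities
  set q : ℂ := 1/4 + δ₁*w*u^3 - γ*(w^2*u^2) with hqdef
  set r : ℂ := α*(w*u) + (β₁+2*δ₁)*(w*u^3) + 2*δ₁*α*(w^2*u^4) + 2*δ₁*β₁*(w^2*u^6)
    with hrdef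
  clear_value q r
  -- lower bound on ‖q‖
  have hs_bound : ‖δ₁*w*u^3 - γ*(w^2*u^2)‖ ≤ D * ‖w‖ := by
    have h1 : ‖δ₁*w*u^3‖ ≤ ‖δ₁‖*M^3*‖w‖ := by
      rw [norm_mul, norm_mul, norm_pow]
      calc ‖δ₁‖*‖w‖*‖u‖^3 = ‖δ₁‖*‖u‖^3*‖w‖ := by ring
        _ ≤ ‖δ₁‖*M^3*‖w‖ := by gcongr
    have h2 : ‖γ*(w^2*u^2)‖ ≤ ‖γ‖*M^2*‖w‖ := by
      rw [norm_mul, norm_mul, norm_pow, norm_pow]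
      have hx : ‖w‖^2*‖u‖^2 ≤ ‖w‖*M^2 :=
        mul_le_mul hwsq (by gcongr) (by positivity) hw0
      nlinarith [norm_nonneg γ]
    calc ‖δ₁*w*u^3 - γ*(w^2*u^2)‖ ≤ ‖δ₁*w*u^3‖ + ‖γ*(w^2*u^2)‖ := norm_sub_le _ _
      _ ≤ ‖δ₁‖*M^3*‖w‖ + ‖γ‖*M^2*‖w‖ := add_le_add h1 h2
      _ = D * ‖w‖ := by rw [hDdef]; ring
  have hs_small : ‖δ₁*w*u^3 - γ*(w^2*u^2)‖ ≤ 1/8 := by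
    have hDw : D * ‖w‖ ≤ D * (1/(8*(D+1))) :=
      mul_le_mul_of_nonneg_left (le_of_lt hw3) hD0
    have hd1 : D * (1/(8*(D+1))) ≤ 1/8 := by
      rw [mul_one_div, div_le_div_iff₀ (by positivity) (by norm_num : (0:ℝ) < 8)]
      nlinarith
    linarith [hs_bound]
  have hq_lb : (1:ℝ)/8 ≤ ‖q‖ := by
    have hqe : (1/4 : ℂ) = q - (δ₁*w*u^3 - γ*(w^2*u^2)) := by rw [hqdef]; ring
    have h14 : ‖(1/4 : ℂ)‖ = 1/4 := by norm_num
    have hns := norm_sub_le q (δ₁*w*u^3 - γ*(w^2*u^2))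
    rw [← hqe, h14] at hns
    linarith
  have hq0 : q ≠ 0 := by
    intro h; rw [h, norm_zero] at hq_lb; linarith
  -- upper bound on ‖r‖
  have h2c : ‖(2:ℂ)‖ = 2 := by simp
  have hr_bound : ‖r‖ ≤ C * ‖w‖ := by
    have t1 : ‖α*(w*u)‖ ≤ ‖α‖*M*‖w‖ := by
      rw [norm_mul, norm_mul]
      calc ‖α‖*(‖w‖*‖u‖) ≤ ‖α‖*(‖w‖*M) := by gcongr
        _ = ‖α‖*M*‖w‖ := by ring
    have t2 : ‖(β₁+2*δ₁)*(w*u^3)‖ ≤ (‖β₁‖+2*‖δ₁‖)*M^3*‖w‖ := by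
      rw [norm_mul, norm_mul, norm_pow]
      have hβ : ‖β₁+2*δ₁‖ ≤ ‖β₁‖+2*‖δ₁‖ := by
        calc ‖β₁+2*δ₁‖ ≤ ‖β₁‖ + ‖2*δ₁‖ := norm_add_le _ _
          _ = ‖β₁‖ + 2*‖δ₁‖ := by rw [norm_mul, h2c]
      have hx : ‖β₁+2*δ₁‖*(‖w‖*‖u‖^3) ≤ (‖β₁‖+2*‖δ₁‖)*(‖w‖*M^3) :=
        mul_le_mul hβ (by gcongr) (by positivity) (by positivity)
      nlinarith
    have t3 : ‖2*δ₁*α*(w^2*u^4)‖ ≤ 2*‖δ₁‖*‖α‖*M^4*‖w‖ := by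
      simp only [norm_mul, norm_pow, h2c]
      have hx : ‖w‖^2*‖u‖^4 ≤ ‖w‖*M^4 :=
        mul_le_mul hwsq (by gcongr) (by positivity) hw0
      nlinarith [norm_nonneg δ₁, norm_nonneg α, mul_nonneg (norm_nonneg δ₁) (norm_nonneg α)]
    have t4 : ‖2*δ₁*β₁*(w^2*u^6)‖ ≤ 2*‖δ₁‖*‖β₁‖*M^6*‖w‖ := by
      simp only [norm_mul, norm_pow, h2c]
      have hx : ‖w‖^2*‖u‖^6 ≤ ‖w‖*M^6 :=
        mul_le_mul hwsq (by gcongr) (by positivity) hw0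
      nlinarith [norm_nonneg δ₁, norm_nonneg β₁, mul_nonneg (norm_nonneg δ₁) (norm_nonneg β₁)]
    calc ‖r‖ = ‖α*(w*u) + (β₁+2*δ₁)*(w*u^3) + 2*δ₁*α*(w^2*u^4) + 2*δ₁*β₁*(w^2*u^6)‖ := by
          rw [hrdef]
      _ ≤ ‖α*(w*u) + (β₁+2*δ₁)*(w*u^3) + 2*δ₁*α*(w^2*u^4)‖ + ‖2*δ₁*β₁*(w^2*u^6)‖ :=
          norm_add_le _ _
      _ ≤ (‖α*(w*u) + (β₁+2*δ₁)*(w*u^3)‖ + ‖2*δ₁*α*(w^2*u^4)‖) + ‖2*δ₁*β₁*(w^2*u^6)‖ := by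
          gcongr; exact norm_add_le _ _
      _ ≤ ((‖α*(w*u)‖ + ‖(β₁+2*δ₁)*(w*u^3)‖) + ‖2*δ₁*α*(w^2*u^4)‖) + ‖2*δ₁*β₁*(w^2*u^6)‖ := by
          gcongr; exact norm_add_le _ _
      _ ≤ (((‖α‖*M*‖w‖) + (‖β₁‖+2*‖δ₁‖)*M^3*‖w‖) + 2*‖δ₁‖*‖α‖*M^4*‖w‖)
            + 2*‖δ₁‖*‖β₁‖*M^6*‖w‖ := by
          gcongr
      _ = C * ‖w‖ := by rw [hCdef]; ring
  have hr_small : ‖r‖ < ε/8 := by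
    have h1 : C * ‖w‖ ≤ C * (ε/(8*(C+1))) :=
      mul_le_mul_of_nonneg_left (le_of_lt hw1) hC0
    have h2 : C * (ε/(8*(C+1))) < ε/8 := by
      rw [← mul_div_assoc, div_lt_div_iff₀ (by positivity) (by norm_num : (0:ℝ) < 8)]
      nlinarith
    linarith [hr_bound]
  -- the energy and its factorization
  have hxi : x * x⁻¹ = 1 := mul_inv_cancel₀ hx0
  have hai : a * a⁻¹ = 1 := mul_inv_cancel₀ ha
  have hbi : b * b⁻¹ = 1 := mul_inv_cancel₀ hb
  have he_fact : a^2*b^2/4 + δ₁*b - γ*a^2 = a^2*b^2*q := by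
    rw [hqdef, hudef, hwdef]
    linear_combination ((-1)*b^2*b⁻¹*δ₁ + (-1)*a*a⁻¹*b^2*b⁻¹*δ₁ + a^2*b^2*b⁻¹^2*γ
        + (-1)*a^2*a⁻¹^2*b^2*b⁻¹*δ₁ + a^3*a⁻¹*b^2*b⁻¹^2*γ)*hai
      + ((-1)*b*δ₁ + a^2*γ + a^2*b*b⁻¹*γ)*hbi
  have hE0 : a^2*b^2/4 + δ₁*b - γ*a^2 ≠ 0 := by
    rw [he_fact]
    exact mul_ne_zero (mul_ne_zero (pow_ne_zero _ ha) (pow_ne_zero _ hb)) hq0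
  refine ⟨hE0, ?_⟩
  have hnum : x * (((↑2 * a ^ 1 * (a ^ 2 * b / 2 + δ₁ - a / x)) * b ^ 2
        + a ^ 2 * (↑2 * b ^ 1 * (-(a * b ^ 2) / 2 + 2 * γ * a + 2 / x * (α + β₁ / a ^ 2)))) / 4
        + δ₁ * (-(a * b ^ 2) / 2 + 2 * γ * a + 2 / x * (α + β₁ / a ^ 2))
        - γ * (↑2 * a ^ 1 * (a ^ 2 * b / 2 + δ₁ - a / x)))
      + 2 * (a ^ 2 * b ^ 2 / 4 + δ₁ * b - γ * a ^ 2) = a ^ 2 * b ^ 2 * r := by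
    rw [hrdef, hudef, hwdef]
    push_cast
    linear_combination
      ((2)*α*δ₁ + (2)*a⁻¹^2*δ₁*β₁ + (2)*a^2*γ + a^2*b*α + (-1/2)*a^2*b^2 + a^2*a⁻¹^2*b*β₁)*hxi
      + (b*β₁ + (-1)*b^2*b⁻¹*β₁ + (-2)*b^2*b⁻¹*δ₁ + (-2)*b^2*b⁻¹^2*α*δ₁
        + (-2)*a⁻¹^2*b^2*b⁻¹^2*δ₁*β₁ + a*a⁻¹*b*β₁ + (-1)*a*a⁻¹*b^2*b⁻¹*β₁
        + (-2)*a*a⁻¹*b^2*b⁻¹*δ₁ + (-2)*a*a⁻¹*b^2*b⁻¹^2*α*δ₁ + (-2)*a*a⁻¹^3*b^2*b⁻¹^2*δ₁*β₁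
        + (-1)*a^2*b^2*b⁻¹*α + (-1)*a^2*a⁻¹^2*b^2*b⁻¹*β₁ + (-2)*a^2*a⁻¹^2*b^2*b⁻¹*δ₁
        + (-2)*a^2*a⁻¹^2*b^2*b⁻¹^2*α*δ₁ + (-2)*a^2*a⁻¹^4*b^2*b⁻¹^2*δ₁*β₁
        + (-2)*a^3*a⁻¹^3*b^2*b⁻¹^2*α*δ₁ + (-2)*a^3*a⁻¹^5*b^2*b⁻¹^2*δ₁*β₁)*hai
      + ((-2)*α*δ₁ + (-1)*b*β₁ + (-2)*b*δ₁ + (-2)*b*b⁻¹*α*δ₁ + (-2)*a⁻¹^2*δ₁*β₁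
        + (-2)*a⁻¹^2*b*b⁻¹*δ₁*β₁ + (-1)*a^2*b*α)*hbi
  have key : x * (((↑2 * a ^ 1 * (a ^ 2 * b / 2 + δ₁ - a / x)) * b ^ 2
        + a ^ 2 * (↑2 * b ^ 1 * (-(a * b ^ 2) / 2 + 2 * γ * a + 2 / x * (α + β₁ / a ^ 2)))) / 4
        + δ₁ * (-(a * b ^ 2) / 2 + 2 * γ * a + 2 / x * (α + β₁ / a ^ 2))
        - γ * (↑2 * a ^ 1 * (a ^ 2 * b / 2 + δ₁ - a / x)))
      / (a ^ 2 * b ^ 2 / 4 + δ₁ * b - γ * a ^ 2) + 2 = r / q := by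
    rw [div_add' _ _ _ hE0, hnum, he_fact,
      mul_div_mul_left r q (mul_ne_zero (pow_ne_zero _ ha) (pow_ne_zero _ hb))]
  rw [key, norm_div]
  have hqpos : (0:ℝ) < ‖q‖ := by linarith
  calc ‖r‖ / ‖q‖ ≤ ‖r‖ * 8 := by
        rw [div_le_iff₀ hqpos]; nlinarith [norm_nonneg r]
    _ < ε := by linarith
end

section
/- Let α, γ, δ₁, β₁ ∈ ℂ and R > 0. Let y, z be holomorphic on {x ∈ ℂ : |x| > R} with y nowhere zero, satisfying the P_III system y′ = y²z/2 + δ₁ − y/x and z′ = −y z²/2 + 2γ y + (2/x)(α + β₁/y²) there. If there exists (y∞, z∞) ∈ ℂ² such that (y(x), z(x)) → (y∞, z∞) as |x| → ∞, then (y∞, z∞) is an equilibrium of the autonomous system: y∞² z∞/2 + δ₁ = 0 and −y∞ z∞²/2 + 2γ y∞ = 0. -/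
open Filter Topology Bornology

/-!
Along the real axis `y` and `z` converge, and by the system their derivatives converge to the
right-hand sides of the autonomous system, since the `1 / x` terms die out. A function on `ℝ`
with a limit at `+∞` whose derivative also has a limit there must have derivative limit `0`.
-/

theorem eq_zero_of_tendsto_of_tendsto_hasDerivAt {E : Type*} [NormedAddCommGroup E]
    [NormedSpace ℝ E] {u g : ℝ → E} {c L : E}
    (hderiv : ∀ᶠ t in atTop, HasDerivAt u (g t) t)
    (hg : Tendsto g atTop (𝓝 L)) (hu : Tendsto u atTop (𝓝 c)) : L = 0 := by
  have hshift : Tendsto (fun t => u (t + 1) - u t) atTop (𝓝 0) := by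
    simpa using (hu.comp (tendsto_atTop_add_const_right _ 1 tendsto_id)).sub hu
  -- Mean value inequality for `s ↦ u s - s • L` on `[t, t + 1]`.
  have hstep : Tendsto (fun t => u (t + 1) - u t) atTop (𝓝 L) := by
    refine Metric.tendsto_nhds.2 fun ε hε => ?_
    have hclose : ∀ᶠ t in atTop, HasDerivAt u (g t) t ∧ dist (g t) L < ε / 2 :=
      hderiv.and (Metric.tendsto_nhds.1 hg _ (half_pos hε))
    obtain ⟨T, hT⟩ := eventually_atTop.1 hclose
    filter_upwards [eventually_ge_atTop T] with t ht
    have hbound := (convex_Icc t (t + 1)).norm_image_sub_le_of_norm_hasDerivWithin_le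
      (f := fun s => u s - s • L) (f' := fun s => g s - L)
      (fun s hs => (((hT s (ht.trans hs.1)).1).sub
        ((hasDerivAt_id s).smul_const L)).hasDerivWithinAt.congr_deriv (by simp))
      (fun s hs => by simpa only [dist_eq_norm] using (hT s (ht.trans hs.1)).2.le)
      (Set.left_mem_Icc.2 (by linarith)) (Set.right_mem_Icc.2 (by linarith))
    have hsub : u (t + 1) - (t + 1) • L - (u t - t • L) = u (t + 1) - u t - L := by
      rw [add_smul, one_smul]; abel
    rw [hsub, add_sub_cancel_left, norm_one, mul_one] at hbound
    rw [dist_eq_norm]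
    linarith
  exact tendsto_nhds_unique hstep hshift

theorem Complex.eq_zero_of_tendsto_of_tendsto_deriv {u : ℂ → ℂ} {c L : ℂ}
    (hu : ∀ᶠ x in cobounded ℂ, DifferentiableAt ℂ u x)
    (hlim : Tendsto u (cobounded ℂ) (𝓝 c)) (hderiv : Tendsto (deriv u) (cobounded ℂ) (𝓝 L)) :
    L = 0 :=
  have hreal := RCLike.tendsto_ofReal_atTop_cobounded ℂ
  eq_zero_of_tendsto_of_tendsto_hasDerivAt ((hreal.eventually hu).mono fun _ h =>
    h.hasDerivAt.comp_ofReal) (hderiv.comp hreal) (hlim.comp hreal)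

theorem limit_point_is_equilibrium_general (α γ δ₁ β₁ : ℂ) (R : ℝ)
    (y z : ℂ → ℂ)
    (hy : DifferentiableOn ℂ y {x : ℂ | R < ‖x‖})
    (hz : DifferentiableOn ℂ z {x : ℂ | R < ‖x‖})
    (hsys1 : ∀ x : ℂ, R < ‖x‖ →
      deriv y x = (y x) ^ 2 * z x / 2 + δ₁ - y x / x)
    (hsys2 : ∀ x : ℂ, R < ‖x‖ →
      deriv z x = -(y x * (z x) ^ 2) / 2 + 2 * γ * y x
        + (2 / x) * (α + β₁ / (y x) ^ 2))
    (yLim zLim : ℂ)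
    (hlim : Tendsto (fun x : ℂ => (y x, z x))
      (Filter.comap (fun x : ℂ => ‖x‖) atTop) (𝓝 (yLim, zLim))) :
    yLim ^ 2 * zLim / 2 + δ₁ = 0 ∧ -(yLim * zLim ^ 2) / 2 + 2 * γ * yLim = 0 := by
  rw [comap_norm_atTop] at hlim
  have hfar : ∀ᶠ x in cobounded ℂ, R < ‖x‖ := tendsto_norm_cobounded_atTop.eventually_gt_atTop R
  have hdiff {f : ℂ → ℂ} (hf : DifferentiableOn ℂ f {x | R < ‖x‖}) :
      ∀ᶠ x in cobounded ℂ, DifferentiableAt ℂ f x :=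
    hfar.mono fun x hx => hf.differentiableAt <|
      (isOpen_lt continuous_const continuous_norm).mem_nhds hx
  have hyLim : Tendsto y (cobounded ℂ) (𝓝 yLim) := (continuous_fst.tendsto _).comp hlim
  have hzLim : Tendsto z (cobounded ℂ) (𝓝 zLim) := (continuous_snd.tendsto _).comp hlim
  have hinv : Tendsto (fun x : ℂ => x⁻¹) (cobounded ℂ) (𝓝 0) := tendsto_inv₀_cobounded
  refine ⟨Complex.eq_zero_of_tendsto_of_tendsto_deriv (hdiff hy) hyLim ?_, ?_⟩
  · refine Tendsto.congr' (hfar.mono fun x hx => (hsys1 x hx).symm) ?_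
    simpa [div_eq_mul_inv] using
      ((((hyLim.pow 2).mul hzLim).div_const 2).add_const δ₁).sub (hyLim.mul hinv)
  · rcases eq_or_ne yLim 0 with hyLim0 | hyLim0
    · simp [hyLim0]
    -- `yLim ≠ 0` keeps `β₁ / y ^ 2` bounded.
    refine Complex.eq_zero_of_tendsto_of_tendsto_deriv (hdiff hz) hzLim <|
      Tendsto.congr' (hfar.mono fun x hx => (hsys2 x hx).symm) ?_
    simpa [div_eq_mul_inv] using
      ((((hyLim.mul (hzLim.pow 2)).neg).div_const 2).add (hyLim.const_mul (2 * γ))).add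
        ((hinv.const_mul 2).mul
          (tendsto_const_nhds.add (tendsto_const_nhds.div (hyLim.pow 2) (pow_ne_zero 2 hyLim0))))

/-- If a holomorphic solution of the P_III system on `{|x| > R}` has a
limit `(yLim, zLim)` as `|x| → ∞`, then `(yLim, zLim)` is an equilibrium of the autonomous
system. -/
theorem limit_point_is_equilibrium (α γ δ₁ β₁ : ℂ) (R : ℝ)
    (y z : ℂ → ℂ)
    (hy : DifferentiableOn ℂ y {x : ℂ | R < ‖x‖})
    (hz : DifferentiableOn ℂ z {x : ℂ | R < ‖x‖})
    (hy0 : ∀ x : ℂ, R < ‖x‖ → y x ≠ 0)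
    (hsys1 : ∀ x : ℂ, R < ‖x‖ →
      deriv y x = (y x) ^ 2 * z x / 2 + δ₁ - y x / x)
    (hsys2 : ∀ x : ℂ, R < ‖x‖ →
      deriv z x = -(y x * (z x) ^ 2) / 2 + 2 * γ * y x
        + (2 / x) * (α + β₁ / (y x) ^ 2))
    (yLim zLim : ℂ)
    (hlim : Tendsto (fun x : ℂ => (y x, z x))
      (Filter.comap (fun x : ℂ => ‖x‖) atTop) (𝓝 (yLim, zLim))) :
    yLim ^ 2 * zLim / 2 + δ₁ = 0 ∧ -(yLim * zLim ^ 2) / 2 + 2 * γ * yLim = 0 :=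
  limit_point_is_equilibrium_general α γ δ₁ β₁ R y z hy hz hsys1 hsys2 yLim zLim hlim
end

section
/- Let α, γ, δ₁, β₁ ∈ ℂ with γ ≠ 0. Let x₀ ∈ ℂ ∖ {0}, let D′ be a punctured open disk centered at x₀, and let y, z : D′ → ℂ be holomorphic with y nowhere zero, satisfying the P_III system y′ = y²z/2 + δ₁ − y/x and z′ = −y z²/2 + 2γ y + (2/x)(α + β₁/y²) on D′. Suppose z extends holomorphically to x₀ and y has a simple pole at x₀ (so that z(x₀)² = 4γ). Then the function x ↦ E(y(x), z(x)) = y(x)²z(x)²/4 + δ₁ z(x) − γ y(x)² extends meromorphically to x₀ with a pole of order at most 1, and lim_{x → x₀} (x − x₀)·E(y(x), z(x)) = −4α/(x₀ · z(x₀)). -/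
/-!
Write `y = g / (x - x₀)` with `g` analytic, `g x₀ ≠ 0`, and let `Z` be the holomorphic extension
of `z`. Comparing leading terms of the two equations at `x₀` gives `g x₀ * Z x₀ = -2` and
`Z x₀ ^ 2 = 4 * γ`. Then `z ^ 2 - 4 * γ = Z ^ 2 - Z x₀ ^ 2` vanishes at `x₀`, so
`y * (z ^ 2 - 4 * γ)` has the finite limit `g x₀ * (Z ^ 2)' x₀`. Fed back into the second equation
this forces `Z' x₀ = -2 * α / x₀`, and in
`(x - x₀) * E = ((x - x₀) * y) ^ 2 / 4 * (z ^ 2 - 4 * γ) / (x - x₀) + (x - x₀) * δ₁ * z`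
the right-hand side tends to `g x₀ ^ 2 * Z x₀ * Z' x₀ / 2 = -4 * α / (x₀ * Z x₀)`.
-/

open Metric Filter Topology

section SimplePole

variable {𝕜 : Type*} [NontriviallyNormedField 𝕜] {f g : 𝕜 → 𝕜} {x₀ : 𝕜}

theorem tendsto_sub_nhdsNE_zero : Tendsto (fun x => x - x₀) (𝓝[≠] x₀) (𝓝 0) :=
  tendsto_sub_nhds_zero_iff.mpr (tendsto_id.mono_left nhdsWithin_le_nhds)

theorem tendsto_inv_nhdsNE_of_ne_zero (hx₀ : x₀ ≠ 0) :
    Tendsto (fun x => x⁻¹) (𝓝[≠] x₀) (𝓝 x₀⁻¹) :=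
  (tendsto_inv₀ hx₀).mono_left nhdsWithin_le_nhds

theorem tendsto_sub_mul_of_eventuallyEq_div (hg : ContinuousAt g x₀)
    (hf : f =ᶠ[𝓝[≠] x₀] fun x => g x / (x - x₀)) :
    Tendsto (fun x => (x - x₀) * f x) (𝓝[≠] x₀) (𝓝 (g x₀)) := by
  refine (hg.tendsto.mono_left nhdsWithin_le_nhds).congr' ?_
  filter_upwards [hf, self_mem_nhdsWithin] with x hfx hx
  rw [hfx, mul_div_cancel₀ _ (sub_ne_zero.mpr hx)]

theorem tendsto_inv_of_eventuallyEq_div (hg : ContinuousAt g x₀) (hg₀ : g x₀ ≠ 0)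
    (hf : f =ᶠ[𝓝[≠] x₀] fun x => g x / (x - x₀)) :
    Tendsto (fun x => (f x)⁻¹) (𝓝[≠] x₀) (𝓝 0) := by
  have h := tendsto_sub_nhdsNE_zero.div (hg.tendsto.mono_left nhdsWithin_le_nhds) hg₀
  rw [zero_div] at h
  refine h.congr' ?_
  filter_upwards [hf] with x hfx
  rw [hfx, inv_div, Pi.div_apply]

theorem tendsto_sq_mul_deriv_of_eventuallyEq_div [CompleteSpace 𝕜] (hg : AnalyticAt 𝕜 g x₀)
    (hf : f =ᶠ[𝓝[≠] x₀] fun x => g x / (x - x₀)) :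
    Tendsto (fun x => (x - x₀) ^ 2 * deriv f x) (𝓝[≠] x₀) (𝓝 (-g x₀)) := by
  obtain ⟨s, hs, hgs⟩ := hg.exists_mem_nhds_analyticOnNhd
  have hg' : ContinuousAt (deriv g) x₀ := (hgs.deriv x₀ (mem_of_mem_nhds hs)).continuousAt
  have h := (hg'.tendsto.mono_left nhdsWithin_le_nhds).mul tendsto_sub_nhdsNE_zero |>.sub
    (hg.continuousAt.tendsto.mono_left nhdsWithin_le_nhds)
  rw [mul_zero, zero_sub] at h
  refine h.congr' ?_
  filter_upwards [hf.nhdsNE_deriv, self_mem_nhdsWithin,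
    nhdsWithin_le_nhds hs] with x hfx hx hxs
  have hx' : x - x₀ ≠ 0 := sub_ne_zero.mpr hx
  have hd : HasDerivAt (fun x => g x / (x - x₀)) _ x :=
    (hgs x hxs).differentiableAt.hasDerivAt.div ((hasDerivAt_id' x).sub_const x₀) hx'
  rw [hfx, hd.deriv]
  field_simp

theorem tendsto_deriv_of_eventuallyEq [CompleteSpace 𝕜] {z Z : 𝕜 → 𝕜} (hZ : AnalyticAt 𝕜 Z x₀)
    (hz : z =ᶠ[𝓝[≠] x₀] Z) : Tendsto (deriv z) (𝓝[≠] x₀) (𝓝 (deriv Z x₀)) := by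
  obtain ⟨s, hs, hZs⟩ := hZ.exists_mem_nhds_analyticOnNhd
  exact ((hZs.deriv x₀ (mem_of_mem_nhds hs)).continuousAt.tendsto.mono_left
    nhdsWithin_le_nhds).congr' hz.nhdsNE_deriv.symm

theorem tendsto_sq_sub_sq_div {z Z : 𝕜 → 𝕜} {Z' : 𝕜} (hZ : HasDerivAt Z Z' x₀)
    (hz : z =ᶠ[𝓝[≠] x₀] Z) :
    Tendsto (fun x => (z x ^ 2 - Z x₀ ^ 2) / (x - x₀)) (𝓝[≠] x₀) (𝓝 (2 * Z x₀ * Z')) := by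
  have h := hasDerivAt_iff_tendsto_slope.mp (hZ.pow 2)
  simp only [Nat.cast_ofNat, Nat.add_one_sub_one, pow_one] at h
  refine h.congr' ?_
  filter_upwards [hz] with x hzx
  rw [slope_def_field, hzx]
  rfl

end SimplePole

namespace PIII

noncomputable def energy (γ δ₁ y z : ℂ) : ℂ := y ^ 2 * z ^ 2 / 4 + δ₁ * z - γ * y ^ 2

variable {α γ δ₁ β₁ x₀ a c c' : ℂ} {y z : ℂ → ℂ}

theorem residue_mul_eq_neg_two
    (hsys : ∀ᶠ x in 𝓝[≠] x₀, deriv y x = y x ^ 2 * z x / 2 + δ₁ - y x / x)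
    (hx₀ : x₀ ≠ 0) (ha : a ≠ 0)
    (hres : Tendsto (fun x => (x - x₀) * y x) (𝓝[≠] x₀) (𝓝 a))
    (hres' : Tendsto (fun x => (x - x₀) ^ 2 * deriv y x) (𝓝[≠] x₀) (𝓝 (-a)))
    (hz : Tendsto z (𝓝[≠] x₀) (𝓝 c)) :
    a * c = -2 := by
  have hlim : Tendsto (fun x => (x - x₀) ^ 2 * deriv y x) (𝓝[≠] x₀) (𝓝 (a ^ 2 * c / 2)) := by
    have h := (((hres.pow 2).mul hz).div_const 2).add
      ((tendsto_sub_nhdsNE_zero.pow 2).mul_const δ₁) |>.sub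
      ((tendsto_sub_nhdsNE_zero.mul hres).mul (tendsto_inv_nhdsNE_of_ne_zero hx₀))
    simp only [ne_eq, OfNat.ofNat_ne_zero, not_false_eq_true, zero_pow, zero_mul, add_zero,
      sub_zero] at h
    refine h.congr' ?_
    filter_upwards [hsys] with x hx
    rw [hx]
    ring
  have key : a * (a * c + 2) = 0 := by linear_combination 2 * tendsto_nhds_unique hlim hres'
  linear_combination (mul_eq_zero.mp key).resolve_left ha

theorem sq_eq_four_mul
    (hsys : ∀ᶠ x in 𝓝[≠] x₀,
      deriv z x = -(y x * z x ^ 2) / 2 + 2 * γ * y x + (2 / x) * (α + β₁ / y x ^ 2))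
    (hx₀ : x₀ ≠ 0) (ha : a ≠ 0)
    (hres : Tendsto (fun x => (x - x₀) * y x) (𝓝[≠] x₀) (𝓝 a))
    (hinv : Tendsto (fun x => (y x)⁻¹) (𝓝[≠] x₀) (𝓝 0))
    (hz : Tendsto z (𝓝[≠] x₀) (𝓝 c)) (hz' : Tendsto (deriv z) (𝓝[≠] x₀) (𝓝 c')) :
    c ^ 2 = 4 * γ := by
  have hlim : Tendsto (fun x => (x - x₀) * deriv z x) (𝓝[≠] x₀)
      (𝓝 (-(a * c ^ 2) / 2 + 2 * γ * a)) := by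
    have h := ((hres.mul (hz.pow 2)).neg.div_const 2).add (hres.const_mul (2 * γ)) |>.add
      ((tendsto_sub_nhdsNE_zero.mul ((tendsto_inv_nhdsNE_of_ne_zero hx₀).const_mul 2)).mul
        ((tendsto_const_nhds (x := α)).add ((hinv.pow 2).const_mul β₁)))
    simp only [zero_mul, add_zero] at h
    refine h.congr' ?_
    filter_upwards [hsys] with x hx
    rw [hx]
    ring
  have key : a * (4 * γ - c ^ 2) = 0 := by
    linear_combination 2 * tendsto_nhds_unique hlim (by simpa using tendsto_sub_nhdsNE_zero.mul hz')
  linear_combination -(mul_eq_zero.mp key).resolve_left ha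

theorem deriv_eq_neg_two_mul_div
    (hsys : ∀ᶠ x in 𝓝[≠] x₀,
      deriv z x = -(y x * z x ^ 2) / 2 + 2 * γ * y x + (2 / x) * (α + β₁ / y x ^ 2))
    (hx₀ : x₀ ≠ 0)
    (hres : Tendsto (fun x => (x - x₀) * y x) (𝓝[≠] x₀) (𝓝 a))
    (hinv : Tendsto (fun x => (y x)⁻¹) (𝓝[≠] x₀) (𝓝 0))
    (hz' : Tendsto (deriv z) (𝓝[≠] x₀) (𝓝 c'))
    (hq : Tendsto (fun x => (z x ^ 2 - c ^ 2) / (x - x₀)) (𝓝[≠] x₀) (𝓝 (2 * c * c')))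
    (hac : a * c = -2) (hc : c ^ 2 = 4 * γ) :
    c' = -2 * α / x₀ := by
  obtain rfl : γ = c ^ 2 / 4 := by linear_combination -hc / 4
  have hlim : Tendsto (deriv z) (𝓝[≠] x₀) (𝓝 (-(a * (2 * c * c')) / 2 + 2 * x₀⁻¹ * α)) := by
    have h := ((hres.mul hq).neg.div_const 2).add
      (((tendsto_inv_nhdsNE_of_ne_zero hx₀).const_mul 2).mul
        ((tendsto_const_nhds (x := α)).add ((hinv.pow 2).const_mul β₁)))
    simp only [ne_eq, OfNat.ofNat_ne_zero, not_false_eq_true, zero_pow, mul_zero,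
      add_zero] at h
    refine h.congr' ?_
    filter_upwards [hsys, self_mem_nhdsWithin] with x hx hne
    rw [hx]
    field_simp [sub_ne_zero.mpr hne]
    ring
  have key := tendsto_nhds_unique hz' hlim
  field_simp at key
  rw [eq_div_iff hx₀]
  linear_combination -key + c' * x₀ * hac

theorem tendsto_sub_mul_energy
    (hres : Tendsto (fun x => (x - x₀) * y x) (𝓝[≠] x₀) (𝓝 a))
    (hz : Tendsto z (𝓝[≠] x₀) (𝓝 c))
    (hq : Tendsto (fun x => (z x ^ 2 - c ^ 2) / (x - x₀)) (𝓝[≠] x₀) (𝓝 (2 * c * c')))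
    (hac : a * c = -2) (hc : c ^ 2 = 4 * γ) (hc' : c' = -2 * α / x₀) :
    Tendsto (fun x => (x - x₀) * energy γ δ₁ (y x) (z x)) (𝓝[≠] x₀)
      (𝓝 (-4 * α / (x₀ * c))) := by
  obtain rfl : γ = c ^ 2 / 4 := by linear_combination -hc / 4
  have h := (((hres.pow 2).div_const 4).mul hq).add (tendsto_sub_nhdsNE_zero.mul (hz.const_mul δ₁))
  have hval : (a ^ 2 / 4) * (2 * c * c') + 0 * (δ₁ * c) = -4 * α / (x₀ * c) := by
    have hc₀ : c ≠ 0 := by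
      rintro rfl
      norm_num at hac
    have hac' : a ^ 2 * c = 4 / c := by
      field_simp
      linear_combination (a * c - 2) * hac
    calc a ^ 2 / 4 * (2 * c * c') + 0 * (δ₁ * c) = -(a ^ 2 * c) * α / x₀ := by rw [hc']; ring
      _ = -4 * α / (x₀ * c) := by rw [hac']; ring
  rw [hval] at h
  refine h.congr' ?_
  filter_upwards [self_mem_nhdsWithin] with x hne
  simp only [energy]
  field_simp [sub_ne_zero.mpr hne]
  ring

end PIII

theorem energy_simple_pole_at_movable_pole_general (α γ δ₁ β₁ : ℂ)
    (x₀ : ℂ) (hx₀ : x₀ ≠ 0) (r : ℝ) (hr : 0 < r)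
    (y z : ℂ → ℂ)
    (hsys1 : ∀ x ∈ ball x₀ r \ {x₀},
      deriv y x = (y x) ^ 2 * z x / 2 + δ₁ - y x / x)
    (hsys2 : ∀ x ∈ ball x₀ r \ {x₀},
      deriv z x = -(y x * (z x) ^ 2) / 2 + 2 * γ * y x
        + (2 / x) * (α + β₁ / (y x) ^ 2))
    (Z : ℂ → ℂ) (hZ : DifferentiableOn ℂ Z (ball x₀ r))
    (hZz : ∀ x ∈ ball x₀ r \ {x₀}, Z x = z x)
    (hy_mer : MeromorphicAt y x₀)
    (hy_pole : meromorphicOrderAt y x₀ = ((-1 : ℤ) : WithTop ℤ)) :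
    MeromorphicAt (fun x => (y x) ^ 2 * (z x) ^ 2 / 4 + δ₁ * z x - γ * (y x) ^ 2) x₀ ∧
    Tendsto
      (fun x => (x - x₀) * ((y x) ^ 2 * (z x) ^ 2 / 4 + δ₁ * z x - γ * (y x) ^ 2))
      (𝓝[≠] x₀) (𝓝 (-4 * α / (x₀ * Z x₀))) := by
  have hball : ball x₀ r \ {x₀} ∈ 𝓝[≠] x₀ := sdiff_mem_nhdsWithin_compl (ball_mem_nhds x₀ hr) _
  obtain ⟨g, hg, hg₀, hyg⟩ := (meromorphicOrderAt_eq_int_iff hy_mer).mp hy_pole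
  have hy : y =ᶠ[𝓝[≠] x₀] fun x => g x / (x - x₀) := by
    filter_upwards [hyg] with x hx
    rw [hx, zpow_neg_one, smul_eq_mul, inv_mul_eq_div]
  have hZ₀ : AnalyticAt ℂ Z x₀ := hZ.analyticAt (ball_mem_nhds x₀ hr)
  have hz : z =ᶠ[𝓝[≠] x₀] Z := eventually_of_mem hball fun x hx => (hZz x hx).symm
  have hres := tendsto_sub_mul_of_eventuallyEq_div hg.continuousAt hy
  have hinv := tendsto_inv_of_eventuallyEq_div hg.continuousAt hg₀ hy
  have hzc : Tendsto z (𝓝[≠] x₀) (𝓝 (Z x₀)) :=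
    (hZ₀.continuousAt.tendsto.mono_left nhdsWithin_le_nhds).congr' hz.symm
  have hz' := tendsto_deriv_of_eventuallyEq hZ₀ hz
  have hq := tendsto_sq_sub_sq_div hZ₀.differentiableAt.hasDerivAt hz
  have hsys1' := eventually_of_mem hball hsys1
  have hsys2' := eventually_of_mem hball hsys2
  have hac := PIII.residue_mul_eq_neg_two hsys1' hx₀ hg₀ hres
    (tendsto_sq_mul_deriv_of_eventuallyEq_div hg hy) hzc
  have hc := PIII.sq_eq_four_mul hsys2' hx₀ hg₀ hres hinv hzc hz'
  have hc' := PIII.deriv_eq_neg_two_mul_div hsys2' hx₀ hres hinv hz' hq hac hc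
  have hz_mer : MeromorphicAt z x₀ := hZ₀.meromorphicAt.congr hz.symm
  exact ⟨by fun_prop, PIII.tendsto_sub_mul_energy hres hzc hq hac hc hc'⟩

/-- At a movable simple pole `x₀` of `y` (with `z` extending
holomorphically to `x₀`), the energy `E(y, z) = y²z²/4 + δ₁z − γy²` extends
meromorphically to `x₀` with a pole of order at most `1`, and
`lim (x − x₀)·E = −4α/(x₀·z(x₀))`. -/
theorem energy_simple_pole_at_movable_pole (α γ δ₁ β₁ : ℂ) (hγ : γ ≠ 0)
    (x₀ : ℂ) (hx₀ : x₀ ≠ 0) (r : ℝ) (hr : 0 < r)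
    (y z : ℂ → ℂ)
    (hy : DifferentiableOn ℂ y (ball x₀ r \ {x₀}))
    (hz : DifferentiableOn ℂ z (ball x₀ r \ {x₀}))
    (hy0 : ∀ x ∈ ball x₀ r \ {x₀}, y x ≠ 0)
    (hsys1 : ∀ x ∈ ball x₀ r \ {x₀},
      deriv y x = (y x) ^ 2 * z x / 2 + δ₁ - y x / x)
    (hsys2 : ∀ x ∈ ball x₀ r \ {x₀},
      deriv z x = -(y x * (z x) ^ 2) / 2 + 2 * γ * y x
        + (2 / x) * (α + β₁ / (y x) ^ 2))
    (Z : ℂ → ℂ) (hZ : DifferentiableOn ℂ Z (ball x₀ r))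
    (hZz : ∀ x ∈ ball x₀ r \ {x₀}, Z x = z x)
    (hy_mer : MeromorphicAt y x₀)
    (hy_pole : meromorphicOrderAt y x₀ = ((-1 : ℤ) : WithTop ℤ)) :
    MeromorphicAt (fun x => (y x) ^ 2 * (z x) ^ 2 / 4 + δ₁ * z x - γ * (y x) ^ 2) x₀ ∧
    Tendsto
      (fun x => (x - x₀) * ((y x) ^ 2 * (z x) ^ 2 / 4 + δ₁ * z x - γ * (y x) ^ 2))
      (𝓝[≠] x₀) (𝓝 (-4 * α / (x₀ * Z x₀))) :=
  energy_simple_pole_at_movable_pole_general α γ δ₁ β₁ x₀ hx₀ r hr y z hsys1 hsys2 Z hZ hZz hy_mer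
    hy_pole
end
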